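/- arXiv:2304.03920 — 7 statements merged into one kernel-verified Lean document; each statement's English description precedes it below -/
import Mathlib

section
/- Fix r > 0 and define γ₂(t) = r²(1+it)²/(1 + r²(1+t²)) for t ∈ ℝ (this is the image under z ↦ z/(1+|z|) of the parabola with focus 0 and directrix t ↦ 2r²(1+it)). Let q = −1/(1+r²). Then for all t ∈ ℝ, |γ₂(t) − q| + |γ₂(t)| = (1+2r²)/(1+r²). In particular, γ₂ traces (part of) an ellipse with foci 0 and q. -/
open Complex

/-
Both `γ₂(t)` and `γ₂(t) - q` are squares of complex numbers divided by positive reals: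
`γ₂(t) = (r(1+it))² / D` and `γ₂(t) - q = (1 + r² + ir²t)² / (D(1+r²))`, with
`D = 1 + r²(1+t²)`. Their norms are therefore rational functions of `r` and `t`, and the
sum of the two collapses to `(1+2r²)/(1+r²)`.
-/

theorem Complex.norm_sq_div_ofReal (z : ℂ) {x : ℝ} (hx : 0 < x) :
    ‖z ^ 2 / x‖ = normSq z / x := by
  rw [norm_div, norm_pow, ← normSq_eq_norm_sq, norm_real, Real.norm_of_nonneg hx.le]

section ParabolaImage

variable (r t : ℝ)

theorem parabolaImage_eq_sq_div :
    (r ^ 2 * (1 + t * I) ^ 2) / (1 + r ^ 2 * (1 + t ^ 2)) =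
      (r * ((1 : ℝ) + t * I)) ^ 2 / ((1 + r ^ 2 * (1 + t ^ 2) : ℝ) : ℂ) := by
  push_cast
  ring

theorem parabolaImage_sub_focus_eq_sq_div :
    (r ^ 2 * (1 + t * I) ^ 2) / (1 + r ^ 2 * (1 + t ^ 2)) - (-1 / (1 + r ^ 2)) =
      ((1 + r ^ 2 : ℝ) + (r ^ 2 * t : ℝ) * I) ^ 2 /
        ((1 + r ^ 2 * (1 + t ^ 2)) * (1 + r ^ 2) : ℝ) := by
  have hD : (1 + r ^ 2 * (1 + t ^ 2) : ℂ) ≠ 0 := by exact_mod_cast (by positivity : (0 : ℝ) < _).ne'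
  have hR : (1 + r ^ 2 : ℂ) ≠ 0 := by exact_mod_cast (by positivity : (0 : ℝ) < _).ne'
  push_cast
  field_simp
  ring_nf
  rw [I_sq]
  ring

end ParabolaImage

theorem image_parabola_is_ellipse_general (r : ℝ) (t : ℝ) :
    ‖(r ^ 2 * (1 + t * Complex.I) ^ 2) / (1 + r ^ 2 * (1 + t ^ 2)) -
        (-1 / (1 + r ^ 2))‖ +
      ‖(r ^ 2 * (1 + t * Complex.I) ^ 2) / (1 + r ^ 2 * (1 + t ^ 2))‖ =
      (1 + 2 * r ^ 2) / (1 + r ^ 2) := by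
  rw [parabolaImage_sub_focus_eq_sq_div, parabolaImage_eq_sq_div,
    norm_sq_div_ofReal _ (by positivity), norm_sq_div_ofReal _ (by positivity),
    normSq_add_mul_I, normSq_mul, normSq_ofReal, normSq_add_mul_I]
  field_simp
  ring

/-- For `γ₂(t) = r²(1+it)²/(1+r²(1+t²))` and `q = −1/(1+r²)`, the sum of distances
from `γ₂(t)` to `q` and to the origin is the constant `(1+2r²)/(1+r²)`;
hence `γ₂` traces part of an ellipse with foci `0` and `q`. -/
theorem image_parabola_is_ellipse (r : ℝ) (hr : 0 < r) (t : ℝ) :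
    ‖(r ^ 2 * (1 + t * Complex.I) ^ 2) / (1 + r ^ 2 * (1 + t ^ 2)) -
        (-1 / (1 + r ^ 2))‖ +
      ‖(r ^ 2 * (1 + t * Complex.I) ^ 2) / (1 + r ^ 2 * (1 + t ^ 2))‖ =
      (1 + 2 * r ^ 2) / (1 + r ^ 2) :=
  image_parabola_is_ellipse_general r t
end

section
/- For every r > 0 and every t ∈ ℝ, the triangle with vertices 0, q = −1/(1+r²), and γ₂(t) = r²(1+it)²/(1+r²(1+t²)) has perimeter exactly 2; that is, |γ₂(t)| + |γ₂(t) − q| + |q| = 2. -/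
open Complex

/-!
Write `a = r²` and `z = 1 + it`, so that `γ₂(t) = a z² / (1 + a‖z‖²)`. Since `Re z = 1`, the identity
`z² + ‖z‖² = 2 (Re z) z` turns `γ₂(t) - q` into the perfect square `(1 + a z)² / ((1 + a)(1 + a‖z‖²))`.
Both `γ₂(t)` and `γ₂(t) - q` are thus squares divided by positive reals, their norms are rational in `a` and
`‖z‖²` (using `‖1 + a z‖² = 1 + 2a + a²‖z‖²`), and the perimeter simplifies to `2`.
-/

theorem Complex.sq_add_sq_norm (z : ℂ) : z ^ 2 + (‖z‖ : ℂ) ^ 2 = 2 * z.re * z := by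
  rw [← mul_conj', sq, ← mul_add, add_conj]
  push_cast
  ring

theorem Complex.sq_norm_one_add_ofReal_mul {z : ℂ} (hz : z.re = 1) (a : ℝ) :
    ‖1 + a * z‖ ^ 2 = 1 + 2 * a + a ^ 2 * ‖z‖ ^ 2 := by
  simp only [Complex.sq_norm, normSq_apply, add_re, add_im, one_re, one_im, re_ofReal_mul,
    im_ofReal_mul, hz]
  ring

section
variable {a : ℝ} (ha : 0 ≤ a) {z : ℂ} (hz : z.re = 1)
include ha hz

theorem div_add_inv_eq_sq_div :
    a * z ^ 2 / (1 + a * ‖z‖ ^ 2) + 1 / (1 + a) =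
      (1 + a * z) ^ 2 / ((1 + a) * (1 + a * ‖z‖ ^ 2)) := by
  have hA : (1 + a : ℂ) ≠ 0 := by exact_mod_cast (by positivity : (0 : ℝ) < 1 + a).ne'
  have hN : (1 + a * ‖z‖ ^ 2 : ℂ) ≠ 0 := by
    exact_mod_cast (by positivity : (0 : ℝ) < 1 + a * ‖z‖ ^ 2).ne'
  have hsq := sq_add_sq_norm z
  rw [hz, ofReal_one, mul_one] at hsq
  rw [div_add_div _ _ hN hA, div_eq_div_iff (mul_ne_zero hN hA) (mul_ne_zero hA hN)]
  linear_combination (1 + a) * (1 + a * ‖z‖ ^ 2) * a * hsq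

theorem norm_add_norm_sub_add_norm_eq_two :
    ‖a * z ^ 2 / (1 + a * ‖z‖ ^ 2)‖ + ‖a * z ^ 2 / (1 + a * ‖z‖ ^ 2) - (-1 / (1 + a))‖ +
      ‖(-1 : ℂ) / (1 + a)‖ = 2 := by
  rw [sub_eq_add_neg, neg_div, neg_neg, div_add_inv_eq_sq_div ha hz, norm_neg]
  have hA : 0 < 1 + a := by positivity
  have hN : 0 < 1 + a * ‖z‖ ^ 2 := by positivity
  simp only [norm_div, norm_mul, norm_pow, norm_one]
  rw [sq_norm_one_add_ofReal_mul hz, ← ofReal_one, ← ofReal_add, ← ofReal_pow, ← ofReal_mul,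
    ← ofReal_add]
  simp only [norm_real, Real.norm_eq_abs, abs_of_nonneg ha, abs_of_pos hA, abs_of_pos hN]
  field_simp
  ring
end

theorem unit_perimeter_triangle_general (r : ℝ) (t : ℝ) :
    ‖((r ^ 2 * (1 + t * Complex.I) ^ 2) / (1 + r ^ 2 * (1 + t ^ 2)) : ℂ)‖ +
      ‖((r ^ 2 * (1 + t * Complex.I) ^ 2) / (1 + r ^ 2 * (1 + t ^ 2)) -
        (-1 / (1 + r ^ 2)) : ℂ)‖ +
      ‖((-1 : ℂ) / (1 + r ^ 2))‖ = 2 := by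
  have hz : ‖1 + t * I‖ ^ 2 = 1 + t ^ 2 := by
    rw [Complex.sq_norm, ← ofReal_one, normSq_add_mul_I, one_pow]
  have hperim := norm_add_norm_sub_add_norm_eq_two (sq_nonneg r) (z := 1 + t * I) (by simp)
  rw [← ofReal_pow, hz] at hperim
  push_cast at hperim
  exact hperim

/-- The triangle with vertices `0`, `q = −1/(1+r²)` and `γ₂(t) = r²(1+it)²/(1+r²(1+t²))`
has perimeter exactly `2`. -/
theorem unit_perimeter_triangle (r : ℝ) (hr : 0 < r) (t : ℝ) :
    ‖((r ^ 2 * (1 + t * Complex.I) ^ 2) / (1 + r ^ 2 * (1 + t ^ 2)) : ℂ)‖ +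
      ‖((r ^ 2 * (1 + t * Complex.I) ^ 2) / (1 + r ^ 2 * (1 + t ^ 2)) -
        (-1 / (1 + r ^ 2)) : ℂ)‖ +
      ‖((-1 : ℂ) / (1 + r ^ 2))‖ = 2 :=
  unit_perimeter_triangle_general r t
end

section
/- If √d₁, √d₂, √d₃ with d₁, d₂, d₃ distinct squarefree positive integers, and positive integers a₁, a₂, a₃, b₁, b₂, b₃ and squarefree positive integers e₁, e₂, e₃ satisfy a₁√d₁ + a₂√d₂ + a₃√d₃ = b₁√e₁ + b₂√e₂ + b₃√e₃, then the multisets {a₁√d₁, a₂√d₂, a₃√d₃} and {b₁√e₁, b₂√e₂, b₃√e₃} of real numbers are equal. -/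
/-!
Let `K_P = ℚ(√p : p ∈ P)` for a finite set `P` of primes. Adjoining one more prime `p`, every
element of `K_P(√p)` is `a + b√p` with `a, b ∈ K_P`; squaring `√m = a + b√p` puts one of `√m`,
`√(mp)`, `√p` in `K_P`, so by induction on `P`, `√m ∉ K_P` for squarefree `m > 1` prime to `P`.
The same induction, splitting squarefree `n` according to whether `p ∣ n`, shows that the `√n`
with `n` squarefree are linearly independent over `ℚ`. Comparing coefficients, each `dᵢ` occurs
among the `eⱼ`; as there are three distinct `dᵢ` and three `eⱼ`, the `eⱼ` are a permutation of
the `dᵢ` with matching coefficients.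
-/

open Function Finset

theorem LinearIndepOn.map_univ_smul_eq {ι κ R M : Type*} [Fintype ι] [Semiring R]
    [AddCommMonoid M] [Module R M] {v : κ → M} {s : Set κ} (hv : LinearIndepOn R v s)
    {a b : ι → R} {d e : ι → κ} (hds : ∀ i, d i ∈ s) (hes : ∀ i, e i ∈ s) (hd : Injective d)
    (ha : ∀ i, a i ≠ 0) (h : ∑ i, a i • v (d i) = ∑ i, b i • v (e i)) :
    univ.val.map (fun i ↦ a i • v (d i)) = univ.val.map (fun i ↦ b i • v (e i)) := by
  classical
  set F : κ →₀ R := ∑ i, Finsupp.single (d i) (a i)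
  set G : κ →₀ R := ∑ i, Finsupp.single (e i) (b i)
  have hFG : F = G := by
    refine linearIndepOn_iffₛ.mp hv F (sum_mem fun i _ ↦ Finsupp.single_mem_supported R _ (hds i))
      G (sum_mem fun i _ ↦ Finsupp.single_mem_supported R _ (hes i)) ?_
    simpa [F, G] using h
  have hF (i : ι) : F (d i) = a i := by simp [F, Finsupp.single_apply, hd.eq_iff]
  have hde : univ.image d ⊆ univ.image e := by
    intro k hk
    obtain ⟨i, -, rfl⟩ := mem_image.mp hk
    by_contra hi
    have hne : ∀ j, e j ≠ d i := fun j hj ↦ hi (mem_image.mpr ⟨j, mem_univ j, hj⟩)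
    refine ha i ?_
    rw [← hF, hFG]
    simp [G, hne]
  have hcard : #(univ.image e) ≤ #(univ.image d) := by
    rw [card_image_of_injective _ hd]; exact card_image_le
  have himage := eq_of_subset_of_card_le hde hcard
  have he : Injective e := by
    rw [← Set.injOn_univ, ← coe_univ, ← card_image_iff]
    exact le_antisymm card_image_le (himage ▸ card_image_of_injective _ hd).ge
  have hG (i : ι) : G (e i) = b i := by simp [G, Finsupp.single_apply, he.eq_iff]
  calc univ.val.map (fun i ↦ a i • v (d i))
      = (univ.val.map d).map (fun k ↦ F k • v k) := by simp [Multiset.map_map, hF]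
    _ = (univ.val.map e).map (fun k ↦ G k • v k) := by
      rw [← image_val_of_injOn hd.injOn, ← image_val_of_injOn he.injOn, himage, hFG]
    _ = univ.val.map (fun i ↦ b i • v (e i)) := by simp [Multiset.map_map, hG]

open Polynomial IntermediateField

theorem IntermediateField.exists_eq_add_mul_of_mem_adjoin_of_sq_eq {F E : Type*} [Field F]
    [Field E] [Algebra F E] {x y : E} {c : F} (hx : x ^ 2 = algebraMap F E c) (hy : y ∈ F⟮x⟯) :
    ∃ a b : F, y = algebraMap F E a + algebraMap F E b * x := by
  set q : F[X] := X ^ 2 - C c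
  have hq : q.Monic := monic_X_pow_sub_C c two_ne_zero
  have hqx : aeval x q = 0 := by simp [q, hx]
  rw [← mem_toSubalgebra, adjoin_simple_toSubalgebra_of_isAlgebraic ⟨q, hq.ne_zero, hqx⟩,
    Algebra.adjoin_singleton_eq_range_aeval] at hy
  obtain ⟨f, rfl⟩ := hy
  have hdeg : (f %ₘ q).natDegree ≤ 1 := by
    have := natDegree_modByMonic_lt f hq fun h ↦ by
      simpa [q, natDegree_X_pow_sub_C] using congrArg natDegree h
    rw [natDegree_X_pow_sub_C] at this
    omega
  refine ⟨(f %ₘ q).coeff 0, (f %ₘ q).coeff 1, ?_⟩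
  rw [AlgHom.toRingHom_eq_coe, RingHom.coe_coe, ← aeval_modByMonic_eq_self_of_root hqx]
  conv_lhs => rw [eq_X_add_C_of_natDegree_le_one hdeg]
  simp only [map_add, map_mul, aeval_C, aeval_X]
  ring

theorem mem_or_mul_mem_or_mem_of_eq_add_mul {E S : Type*} [Field E] [NeZero (2 : E)] [SetLike S E]
    [SubfieldClass S E] {K : S} {x y a b : E} (hx : x ^ 2 ∈ K) (hy : y ^ 2 ∈ K) (ha : a ∈ K)
    (hb : b ∈ K) (h : x = a + b * y) : x ∈ K ∨ x * y ∈ K ∨ y ∈ K := by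
  by_cases hb0 : b = 0
  · left
    simpa [h, hb0] using ha
  by_cases ha0 : a = 0
  · right; left
    rw [h, ha0, zero_add, mul_assoc, ← sq]
    exact mul_mem hb hy
  right; right
  have hy_eq : y = (x ^ 2 - a ^ 2 - b ^ 2 * y ^ 2) / (2 * a * b) := by
    rw [h]; field_simp; ring
  rw [hy_eq]
  exact div_mem (sub_mem (sub_mem hx (pow_mem ha 2)) (mul_mem (pow_mem hb 2) hy))
    (mul_mem (mul_mem (ofNat_mem K 2) ha) hb)

noncomputable def sqrtAdjoin (P : Finset ℕ) : IntermediateField ℚ ℝ :=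
  adjoin ℚ ((fun p : ℕ ↦ √(p : ℝ)) '' P)

theorem sqrtAdjoin_empty : sqrtAdjoin ∅ = ⊥ := by
  simp [sqrtAdjoin]

theorem sqrtAdjoin_insert (p : ℕ) (P : Finset ℕ) :
    sqrtAdjoin (insert p P) = (adjoin (sqrtAdjoin P) {√(p : ℝ)}).restrictScalars ℚ := by
  rw [sqrtAdjoin, coe_insert, Set.image_insert_eq, Set.insert_eq, Set.union_comm,
    ← adjoin_adjoin_left]
  rfl

theorem sqrt_mem_sqrtAdjoin {P : Finset ℕ} {m : ℕ} (hm : m.primeFactors ⊆ P) :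
    √(m : ℝ) ∈ sqrtAdjoin P := by
  induction m using induction_on_primes with
  | zero => simp
  | one => simp
  | prime_mul p a hp ih =>
    rcases eq_or_ne a 0 with rfl | ha
    · simp
    rw [Nat.primeFactors_mul hp.ne_zero ha, hp.primeFactors, singleton_union,
      insert_subset_iff] at hm
    rw [Nat.cast_mul, Real.sqrt_mul (Nat.cast_nonneg p)]
    exact mul_mem (subset_adjoin ℚ _ ⟨p, hm.1, rfl⟩) (ih hm.2)

theorem sqrt_notMem_sqrtAdjoin {P : Finset ℕ} (hP : ∀ p ∈ P, p.Prime) {m : ℕ}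
    (hm : Squarefree m) (hm1 : m ≠ 1) (hmP : ∀ p ∈ P, ¬ p ∣ m) : √(m : ℝ) ∉ sqrtAdjoin P := by
  induction P using Finset.induction_on generalizing m with
  | empty =>
    rw [sqrtAdjoin_empty, mem_bot]
    rintro ⟨r, hr⟩
    refine irrational_sqrt_natCast_iff.mpr ?_ ⟨r, hr⟩
    rintro ⟨k, rfl⟩
    exact hm1 (by simp [Nat.isUnit_iff.mp (hm k dvd_rfl)])
  | insert p P hpP ih =>
    have hp := hP p (mem_insert_self p P)
    have hPprime q (hq : q ∈ P) := hP q (mem_insert_of_mem hq)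
    have hPp : ∀ q ∈ P, ¬ q ∣ p := fun q hq hqp ↦
      hpP ((Nat.prime_dvd_prime_iff_eq (hPprime q hq) hp).mp hqp ▸ hq)
    have hPm : ∀ q ∈ P, ¬ q ∣ m := fun q hq ↦ hmP q (mem_insert_of_mem hq)
    have hpm : ¬ p ∣ m := hmP p (mem_insert_self p P)
    have hsq (n : ℕ) : √(n : ℝ) ^ 2 ∈ sqrtAdjoin P := by
      rw [Real.sq_sqrt (Nat.cast_nonneg n)]; exact _root_.natCast_mem _ n
    rw [sqrtAdjoin_insert, mem_restrictScalars]
    intro hmem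
    obtain ⟨a, b, hab⟩ := exists_eq_add_mul_of_mem_adjoin_of_sq_eq
      (c := (p : sqrtAdjoin P)) (by rw [map_natCast, Real.sq_sqrt (Nat.cast_nonneg p)]) hmem
    rcases mem_or_mul_mem_or_mem_of_eq_add_mul (hsq m) (hsq p) a.2 b.2 hab with h | h | h
    · exact ih hPprime hm hm1 hPm h
    · rw [← Real.sqrt_mul (Nat.cast_nonneg m), ← Nat.cast_mul] at h
      refine ih hPprime ?_ ?_ ?_ h
      · exact Nat.squarefree_mul_iff.mpr
          ⟨Nat.coprime_comm.mp ((Nat.Prime.coprime_iff_not_dvd hp).mpr hpm), hm, hp.squarefree⟩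
      · exact fun h1 ↦ hp.ne_one (Nat.eq_one_of_mul_eq_one_left h1)
      · exact fun q hq hqd ↦ ((hPprime q hq).dvd_mul.mp hqd).elim (hPm q hq) (hPp q hq)
    · exact ih hPprime hp.squarefree hp.ne_one hPp h

theorem eq_zero_of_sqrt_mul_mem_sqrtAdjoin {P : Finset ℕ} (hP : ∀ q ∈ P, q.Prime) {p : ℕ}
    (hp : p.Prime) (hpP : p ∉ P) {y : ℝ} (hy : y ∈ sqrtAdjoin P)
    (hpy : √(p : ℝ) * y ∈ sqrtAdjoin P) : y = 0 := by
  by_contra hy0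
  refine sqrt_notMem_sqrtAdjoin hP hp.squarefree hp.ne_one (fun q hq hqp ↦ ?_) ?_
  · exact hpP ((Nat.prime_dvd_prime_iff_eq (hP q hq) hp).mp hqp ▸ hq)
  · simpa [hy0] using div_mem hpy hy

def squarefreeFactored (P : Finset ℕ) : Set ℕ := {n | Squarefree n ∧ n.primeFactors ⊆ P}

theorem squarefreeFactored_empty_subset : squarefreeFactored ∅ ⊆ {1} := by
  rintro n ⟨hn, hnP⟩
  rcases Nat.primeFactors_eq_empty.mp (subset_empty.mp hnP) with rfl | rfl
  · exact absurd hn not_squarefree_zero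
  · rfl

theorem squarefreeFactored_insert_subset {P : Finset ℕ} {p : ℕ} (hp : p.Prime) :
    squarefreeFactored (insert p P) ⊆
      squarefreeFactored P ∪ (· * p) '' squarefreeFactored P := by
  rintro n ⟨hn, hnP⟩
  by_cases hpn : p ∣ n
  · obtain ⟨k, rfl⟩ := hpn
    obtain ⟨hpk, -, hk⟩ := Nat.squarefree_mul_iff.mp hn
    refine Or.inr ⟨k, ⟨hk, fun q hq ↦ ?_⟩, mul_comm k p⟩
    have hqn := Nat.primeFactors_mono (dvd_mul_left k p) hn.ne_zero hq
    refine (mem_insert.mp (hnP hqn)).resolve_left ?_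
    rintro rfl
    exact (Nat.Prime.coprime_iff_not_dvd hp).mp hpk (Nat.dvd_of_mem_primeFactors hq)
  · refine Or.inl ⟨hn, fun q hq ↦ (mem_insert.mp (hnP hq)).resolve_left ?_⟩
    rintro rfl
    exact hpn (Nat.dvd_of_mem_primeFactors hq)

theorem span_sqrt_squarefreeFactored_le (P : Finset ℕ) :
    Submodule.span ℚ ((fun n : ℕ ↦ √(n : ℝ)) '' squarefreeFactored P) ≤
      Subalgebra.toSubmodule (sqrtAdjoin P).toSubalgebra :=
  Submodule.span_le.mpr (by rintro _ ⟨n, hn, rfl⟩; exact sqrt_mem_sqrtAdjoin hn.2)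

theorem linearIndepOn_sqrt_squarefreeFactored {P : Finset ℕ} (hP : ∀ p ∈ P, p.Prime) :
    LinearIndepOn ℚ (fun n : ℕ ↦ √(n : ℝ)) (squarefreeFactored P) := by
  induction P using Finset.induction_on with
  | empty => exact (LinearIndepOn.singleton (by simp)).mono squarefreeFactored_empty_subset
  | insert p P hpP ih =>
    have hp := hP p (mem_insert_self p P)
    have hPprime q (hq : q ∈ P) := hP q (mem_insert_of_mem hq)
    have hsqrt_mul : (fun n : ℕ ↦ √(n : ℝ)) ∘ (· * p) =
        LinearMap.mulLeft ℚ √(p : ℝ) ∘ fun n : ℕ ↦ √(n : ℝ) := by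
      ext n
      simp [mul_comm]
    refine ((ih hPprime).union ?_ ?_).mono (squarefreeFactored_insert_subset hp)
    · refine LinearIndepOn.image_of_comp _ _ ?_
      rw [hsqrt_mul]
      exact (ih hPprime).map_injOn _
        (mul_right_injective₀ (Real.sqrt_ne_zero'.mpr (by exact_mod_cast hp.pos))).injOn
    · rw [← Set.image_comp, hsqrt_mul, Set.image_comp, Submodule.span_image,
        Submodule.disjoint_def]
      rintro _ hx ⟨y, hy, rfl⟩
      have hle := span_sqrt_squarefreeFactored_le P
      simp [eq_zero_of_sqrt_mul_mem_sqrtAdjoin hPprime hp hpP (hle hy) (hle hx)]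

theorem linearIndepOn_sqrt_squarefree :
    LinearIndepOn ℚ (fun n : ℕ ↦ √(n : ℝ)) {n | Squarefree n} := by
  classical
  refine linearIndepOn_of_finite _ fun t ht htf ↦ ?_
  refine (linearIndepOn_sqrt_squarefreeFactored (P := htf.toFinset.biUnion Nat.primeFactors)
    ?_).mono fun n hn ↦ ⟨ht hn, subset_biUnion_of_mem _ (htf.mem_toFinset.mpr hn)⟩
  simp only [mem_biUnion]
  rintro p ⟨n, -, hp⟩
  exact Nat.prime_of_mem_primeFactors hp

theorem sqrt_sum_eq_multiset_general (a₁ a₂ a₃ b₁ b₂ b₃ d₁ d₂ d₃ e₁ e₂ e₃ : ℕ)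
    (ha₁ : 0 < a₁) (ha₂ : 0 < a₂) (ha₃ : 0 < a₃)
    (hsd₁ : Squarefree d₁) (hsd₂ : Squarefree d₂) (hsd₃ : Squarefree d₃)
    (hse₁ : Squarefree e₁) (hse₂ : Squarefree e₂) (hse₃ : Squarefree e₃)
    (hne₁ : d₁ ≠ d₂) (hne₂ : d₁ ≠ d₃) (hne₃ : d₂ ≠ d₃)
    (heq : (a₁ : ℝ) * Real.sqrt d₁ + a₂ * Real.sqrt d₂ + a₃ * Real.sqrt d₃ =
      (b₁ : ℝ) * Real.sqrt e₁ + b₂ * Real.sqrt e₂ + b₃ * Real.sqrt e₃) :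
    ({(a₁ : ℝ) * Real.sqrt d₁, (a₂ : ℝ) * Real.sqrt d₂, (a₃ : ℝ) * Real.sqrt d₃} : Multiset ℝ) =
      ({(b₁ : ℝ) * Real.sqrt e₁, (b₂ : ℝ) * Real.sqrt e₂, (b₃ : ℝ) * Real.sqrt e₃} : Multiset ℝ) := by
  have key := LinearIndepOn.map_univ_smul_eq linearIndepOn_sqrt_squarefree
    (a := ![(a₁ : ℚ), a₂, a₃]) (b := ![(b₁ : ℚ), b₂, b₃]) (d := ![d₁, d₂, d₃]) (e := ![e₁, e₂, e₃])
    (fun i ↦ by fin_cases i <;> simpa) (fun i ↦ by fin_cases i <;> simpa)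
    (fun i j ↦ by
      fin_cases i <;> fin_cases j <;> simp [hne₁, hne₂, hne₃, hne₁.symm, hne₂.symm, hne₃.symm])
    (fun i ↦ by fin_cases i <;> simp <;> positivity)
    (by simpa [Fin.sum_univ_three, Rat.smul_def] using heq)
  exact Multiset.coe_eq_coe.mpr (by simpa [Fin.univ_val_map, Rat.smul_def] using key)

/-- If `a₁√d₁ + a₂√d₂ + a₃√d₃ = b₁√e₁ + b₂√e₂ + b₃√e₃` with `d₁, d₂, d₃` distinct
squarefree positive integers, `e₁, e₂, e₃` squarefree positive integers, and all
`aᵢ, bᵢ` positive integers, then the two multisets of side lengths coincide. -/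
theorem sqrt_sum_eq_multiset (a₁ a₂ a₃ b₁ b₂ b₃ d₁ d₂ d₃ e₁ e₂ e₃ : ℕ)
    (ha₁ : 0 < a₁) (ha₂ : 0 < a₂) (ha₃ : 0 < a₃)
    (hb₁ : 0 < b₁) (hb₂ : 0 < b₂) (hb₃ : 0 < b₃)
    (hd₁ : 0 < d₁) (hd₂ : 0 < d₂) (hd₃ : 0 < d₃)
    (he₁ : 0 < e₁) (he₂ : 0 < e₂) (he₃ : 0 < e₃)
    (hsd₁ : Squarefree d₁) (hsd₂ : Squarefree d₂) (hsd₃ : Squarefree d₃)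
    (hse₁ : Squarefree e₁) (hse₂ : Squarefree e₂) (hse₃ : Squarefree e₃)
    (hne₁ : d₁ ≠ d₂) (hne₂ : d₁ ≠ d₃) (hne₃ : d₂ ≠ d₃)
    (heq : (a₁ : ℝ) * Real.sqrt d₁ + a₂ * Real.sqrt d₂ + a₃ * Real.sqrt d₃ =
      (b₁ : ℝ) * Real.sqrt e₁ + b₂ * Real.sqrt e₂ + b₃ * Real.sqrt e₃) :
    ({(a₁ : ℝ) * Real.sqrt d₁, (a₂ : ℝ) * Real.sqrt d₂, (a₃ : ℝ) * Real.sqrt d₃} : Multiset ℝ) =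
      ({(b₁ : ℝ) * Real.sqrt e₁, (b₂ : ℝ) * Real.sqrt e₂, (b₃ : ℝ) * Real.sqrt e₃} : Multiset ℝ) :=
  sqrt_sum_eq_multiset_general a₁ a₂ a₃ b₁ b₂ b₃ d₁ d₂ d₃ e₁ e₂ e₃ ha₁ ha₂ ha₃ hsd₁ hsd₂ hsd₃ hse₁
    hse₂ hse₃ hne₁ hne₂ hne₃ heq
end

section
/- Let k be a positive integer and s = (2k−1)². If (x, y, z) ∈ ℤ³ satisfies x² + y² + z² = s with xyz ≠ 0, then the positive integers a = s − x², b = s − y², c = s − z² satisfy: a + b + c = 2s, each of a, b, c is a positive integer strictly less than s (in particular the triangle inequality holds so a, b, c are sides of a non-degenerate triangle), and s(s−a)(s−b)(s−c) is a perfect square, so the triangle with sides a, b, c has integer area. -/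
/-- If `s = (2k−1)²` and `x² + y² + z² = s` with `xyz ≠ 0`, then `a = s − x²`,
`b = s − y²`, `c = s − z²` are positive integers less than `s` summing to `2s`
(so they satisfy the triangle inequality), and `s(s−a)(s−b)(s−c)` is a perfect
square; hence the triangle with sides `a, b, c` is Heronian. -/
theorem sum_three_squares_heronian (k : ℕ) (hk : 1 ≤ k) (s : ℤ)
    (hs : s = (2 * (k : ℤ) - 1) ^ 2)
    (x y z : ℤ) (hxyz : x ^ 2 + y ^ 2 + z ^ 2 = s) (hnz : x * y * z ≠ 0) :
    (s - x ^ 2) + (s - y ^ 2) + (s - z ^ 2) = 2 * s ∧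
    (0 < s - x ^ 2 ∧ s - x ^ 2 < s) ∧
    (0 < s - y ^ 2 ∧ s - y ^ 2 < s) ∧
    (0 < s - z ^ 2 ∧ s - z ^ 2 < s) ∧
    s - x ^ 2 < (s - y ^ 2) + (s - z ^ 2) ∧
    s - y ^ 2 < (s - x ^ 2) + (s - z ^ 2) ∧
    s - z ^ 2 < (s - x ^ 2) + (s - y ^ 2) ∧
    ∃ m : ℤ, s * (s - (s - x ^ 2)) * (s - (s - y ^ 2)) * (s - (s - z ^ 2)) = m ^ 2 := by
  have hx : x ≠ 0 := fun h => hnz (by simp [h])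
  have hy : y ≠ 0 := fun h => hnz (by simp [h])
  have hz : z ≠ 0 := fun h => hnz (by simp [h])
  have hx2 : 0 < x ^ 2 := by positivity
  have hy2 : 0 < y ^ 2 := by positivity
  have hz2 : 0 < z ^ 2 := by positivity
  refine ⟨by linarith, ⟨by linarith, by linarith⟩, ⟨by linarith, by linarith⟩,
    ⟨by linarith, by linarith⟩, by linarith, by linarith, by linarith,
    ⟨(2 * (k : ℤ) - 1) * (x * y * z), by rw [hs]; ring⟩⟩
end

section
/- Let k ∈ ℕ, k ≥ 1, and p = 2(2k−1)². Then the number H(p) of non-congruent Heronian triangles with perimeter p satisfies H(p) = Ω(k); i.e., there is an absolute constant c > 0 such that H(2(2k−1)²) ≥ c·k for all sufficiently large k. -/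
/-!
Isosceles triangles suffice. For `1 ≤ j < m` put `w = j(m - j)`; the triangle with base `4w` and
legs `m² - 2w` has perimeter `2m²`, and since `m² - 4w = (m - 2j)²` Heron's formula gives it the
integer area `2m(m - 2j)w`. For `j ≤ m/6` the base is the shortest side, and `j ↦ j(m - j)` is
injective there, so perimeter `2m²` carries at least `m/6` Heronian triangles.
-/

/-- The number of non-congruent Heronian triangles (non-degenerate triangles with
integer side lengths and integer area) with perimeter `n`, counted as ordered triples
`a ≤ b ≤ c`; by Heron's formula the area is an integer `A` iff
`(a+b+c)(−a+b+c)(a−b+c)(a+b−c) = 16A²`. -/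
noncomputable def heronianCount (n : ℕ) : ℕ :=
  {t : ℕ × ℕ × ℕ | t.1 ≤ t.2.1 ∧ t.2.1 ≤ t.2.2 ∧ t.1 + t.2.1 + t.2.2 = n ∧
    0 < t.1 ∧ t.2.2 < t.1 + t.2.1 ∧
    ∃ A : ℕ, ((t.1 : ℤ) + t.2.1 + t.2.2) * (-(t.1 : ℤ) + t.2.1 + t.2.2) *
      ((t.1 : ℤ) - t.2.1 + t.2.2) * ((t.1 : ℤ) + t.2.1 - t.2.2) = 16 * (A : ℤ) ^ 2}.ncard

def heronianTriples (n : ℕ) : Set (ℕ × ℕ × ℕ) :=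
  {t : ℕ × ℕ × ℕ | t.1 ≤ t.2.1 ∧ t.2.1 ≤ t.2.2 ∧ t.1 + t.2.1 + t.2.2 = n ∧
    0 < t.1 ∧ t.2.2 < t.1 + t.2.1 ∧
    ∃ A : ℕ, ((t.1 : ℤ) + t.2.1 + t.2.2) * (-(t.1 : ℤ) + t.2.1 + t.2.2) *
      ((t.1 : ℤ) - t.2.1 + t.2.2) * ((t.1 : ℤ) + t.2.1 - t.2.2) = 16 * (A : ℤ) ^ 2}

theorem heronianCount_eq_ncard (n : ℕ) : heronianCount n = (heronianTriples n).ncard := rfl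

theorem heronianTriples_finite (n : ℕ) : (heronianTriples n).Finite := by
  refine ((Set.finite_Iic n).prod ((Set.finite_Iic n).prod (Set.finite_Iic n))).subset ?_
  rintro ⟨a, b, c⟩ ⟨-, -, hsum : a + b + c = n, -⟩
  simp only [Set.mem_prod, Set.mem_Iic]
  omega

theorem isosceles_mem_heronianTriples {m d w : ℕ} (hw : 0 < w) (hbase : 6 * w ≤ m ^ 2)
    (hd : d ^ 2 + 4 * w = m ^ 2) :
    (4 * w, m ^ 2 - 2 * w, m ^ 2 - 2 * w) ∈ heronianTriples (2 * m ^ 2) := by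
  dsimp only [heronianTriples, Set.mem_ofPred_eq]
  refine ⟨by omega, le_rfl, by omega, by omega, by omega, 2 * m * d * w, ?_⟩
  have hleg : ((m ^ 2 - 2 * w : ℕ) : ℤ) = (d : ℤ) ^ 2 + 2 * w := by
    rw [Nat.cast_sub (by omega)]
    push_cast [← hd]
    ring
  have hm : (m : ℤ) ^ 2 = d ^ 2 + 4 * w := by exact_mod_cast hd.symm
  rw [hleg]
  push_cast
  linear_combination (-64 * (w : ℤ) ^ 2 * d ^ 2) * hm

theorem strictMonoOn_mul_sub (m : ℕ) : StrictMonoOn (fun j => j * (m - j)) {j | 2 * j ≤ m} := by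
  intro i hi j hj hij
  simp only [Set.mem_ofPred_eq] at hi hj
  zify [show i ≤ m by omega, show j ≤ m by omega] at hi hj hij ⊢
  nlinarith [mul_pos (sub_pos.mpr hij) (show (0 : ℤ) < m - i - j by linarith)]

theorem le_heronianCount_two_mul_sq {m N : ℕ} (hN : 6 * N ≤ m) :
    N ≤ heronianCount (2 * m ^ 2) := by
  let triangle : ℕ → ℕ × ℕ × ℕ := fun j =>
    (4 * (j * (m - j)), m ^ 2 - 2 * (j * (m - j)), m ^ 2 - 2 * (j * (m - j)))
  have hmaps : ∀ j ∈ Finset.Icc 1 N, triangle j ∈ heronianTriples (2 * m ^ 2) := by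
    intro j hj
    rw [Finset.mem_Icc] at hj
    refine isosceles_mem_heronianTriples (d := m - 2 * j) (Nat.mul_pos (by omega) (by omega))
      ?_ ?_
    · calc 6 * (j * (m - j)) ≤ 6 * N * m := by
            rw [mul_assoc]; gcongr; exacts [hj.2, Nat.sub_le m j]
        _ ≤ m ^ 2 := by rw [sq]; gcongr
    · obtain ⟨r, rfl⟩ : ∃ r, m = 2 * j + r := ⟨m - 2 * j, by omega⟩
      rw [show 2 * j + r - j = j + r by omega, Nat.add_sub_cancel_left]
      ring
  have hinj : Set.InjOn triangle (Finset.Icc 1 N : Set ℕ) := by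
    intro i hi j hj hij
    simp only [Finset.coe_Icc, Set.mem_Icc] at hi hj
    exact (strictMonoOn_mul_sub m).injOn (by simp only [Set.mem_ofPred_eq]; omega)
      (by simp only [Set.mem_ofPred_eq]; omega) (by simpa [triangle] using congrArg Prod.fst hij)
  rw [heronianCount_eq_ncard]
  calc N = (Finset.Icc 1 N : Set ℕ).ncard := by simp
    _ ≤ (heronianTriples (2 * m ^ 2)).ncard :=
      Set.ncard_le_ncard_of_injOn triangle hmaps hinj (heronianTriples_finite _)

/-- There is an absolute constant `c > 0` such that for all sufficiently large `k`,
the number of non-congruent Heronian triangles with perimeter `2(2k−1)²` is at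
least `c·k`; that is, `H(2(2k−1)²) = Ω(k)`. -/
theorem heronian_count_lower :
    ∃ c : ℝ, 0 < c ∧ ∃ K : ℕ, ∀ k : ℕ, K ≤ k →
      c * k ≤ (heronianCount (2 * (2 * k - 1) ^ 2) : ℝ) := by
  refine ⟨1 / 4, by norm_num, 12, fun k hk => ?_⟩
  have hcount := le_heronianCount_two_mul_sq (Nat.mul_div_le (2 * k - 1) 6)
  have hk : k ≤ 4 * heronianCount (2 * (2 * k - 1) ^ 2) := by omega
  rw [one_div_mul_eq_div, div_le_iff₀ (by norm_num), mul_comm]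
  exact_mod_cast hk
end

section
/- Every Heronian triangle can be realized with all three vertices in ℤ²; i.e., if a triangle has integer side lengths and integer area, then there exist points A, B, C ∈ ℤ² such that the triangle ABC has those side lengths. -/
/-!
Heron's formula says `(b² + c² - a²)² + (4Δ)² = (2bc)²`, so `w = m + 2Δi` with `2m = b² + c² - a²`
is a Gaussian integer of norm `(bc)²`. For a prime `p` with `p² ∣ N w`, `w` has a divisor of norm
`p²`: `p` itself if `p ≡ 3 [MOD 4]` (then `p` is a Gaussian prime), and otherwise a product of two
factors `π` or `conj π` of `p = π conj π`. Splitting off such divisors prime by prime writes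
`w = z₁ z₂` with `N z₁ = c²` and `N z₂ = b²`. Then `0`, `z₁` and `conj z₂` are
lattice points with `|z₁|² = c²`, `|z₂|² = b²` and
`|z₁ - conj z₂|² = b² + c² - 2 Re w = a²`.
-/

local notation "ℤ[i]" => GaussianInt

theorem Zsqrtd.irreducible_of_irreducible_norm {d : ℤ} {z : ℤ√d} (h : Irreducible z.norm) :
    Irreducible z :=
  ⟨fun hz => h.not_isUnit ((isUnit_iff_norm_isUnit z).1 hz), fun x y hxy => by
    simpa only [isUnit_iff_norm_isUnit] using h.isUnit_or_isUnit (by rw [hxy, norm_mul])⟩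

namespace GaussianInt

theorem dvd_or_star_dvd_of_dvd_norm {π w : ℤ[i]} (hπ : Prime π) (h : π ∣ (w.norm : ℤ[i])) :
    π ∣ w ∨ star π ∣ w := by
  rw [Zsqrtd.norm_eq_mul_conj] at h
  refine (hπ.dvd_or_dvd h).imp id fun h' => ?_
  simpa only [starRingEnd_apply, star_star] using map_dvd (starRingEnd ℤ[i]) h'

theorem natCast_dvd_of_dvd_norm {p : ℕ} [Fact p.Prime] (hp3 : p % 4 = 3) {w : ℤ[i]}
    (h : (p : ℤ) ∣ w.norm) : (p : ℤ[i]) ∣ w := by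
  have hp : Prime (p : ℤ[i]) := prime_of_nat_prime_of_mod_four_eq_three p hp3
  have hdvd : (p : ℤ[i]) ∣ (w.norm : ℤ[i]) := by simpa using map_dvd (Int.castRingHom ℤ[i]) h
  simpa using dvd_or_star_dvd_of_dvd_norm hp hdvd

theorem exists_dvd_norm_eq_of_dvd_norm {p : ℕ} [Fact p.Prime] (hp3 : p % 4 ≠ 3) {w : ℤ[i]}
    (h : (p : ℤ) ∣ w.norm) : ∃ π : ℤ[i], π ∣ w ∧ π.norm = p := by
  obtain ⟨s, t, hst⟩ := Nat.Prime.sq_add_sq hp3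
  set π : ℤ[i] := ⟨s, t⟩
  have hπ : π.norm = p := by simp only [π, Zsqrtd.norm_def]; push_cast [← hst]; ring
  have hprime : Prime π := irreducible_iff_prime.1 <| Zsqrtd.irreducible_of_irreducible_norm <| by
    rw [hπ]; exact (Nat.prime_iff_prime_int.1 Fact.out).irreducible
  have hdvd : π ∣ (w.norm : ℤ[i]) := by
    refine dvd_trans ⟨star π, ?_⟩ (by simpa using map_dvd (Int.castRingHom ℤ[i]) h)
    rw [← Zsqrtd.norm_eq_mul_conj, hπ]; rfl
  rcases dvd_or_star_dvd_of_dvd_norm hprime hdvd with h' | h'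
  · exact ⟨π, h', hπ⟩
  · exact ⟨star π, h', by rw [Zsqrtd.norm_conj, hπ]⟩

theorem exists_dvd_norm_eq_sq_of_sq_dvd_norm {p : ℕ} (hp : p.Prime) {w : ℤ[i]}
    (h : (p : ℤ) ^ 2 ∣ w.norm) : ∃ g : ℤ[i], g ∣ w ∧ g.norm = (p : ℤ) ^ 2 := by
  have : Fact p.Prime := ⟨hp⟩
  have hpw : (p : ℤ) ∣ w.norm := dvd_trans (dvd_pow_self _ two_ne_zero) h
  by_cases hp3 : p % 4 = 3
  · refine ⟨p, natCast_dvd_of_dvd_norm hp3 hpw, ?_⟩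
    rw [Zsqrtd.norm_natCast, sq]
  · obtain ⟨π₁, ⟨w₁, rfl⟩, hπ₁⟩ := exists_dvd_norm_eq_of_dvd_norm hp3 hpw
    have hpw₁ : (p : ℤ) ∣ w₁.norm := by
      rw [Zsqrtd.norm_mul, hπ₁, sq] at h
      exact (mul_dvd_mul_iff_left (by exact_mod_cast hp.ne_zero)).1 h
    obtain ⟨π₂, hπ₂w, hπ₂⟩ := exists_dvd_norm_eq_of_dvd_norm hp3 hpw₁
    exact ⟨π₁ * π₂, mul_dvd_mul_left π₁ hπ₂w, by rw [Zsqrtd.norm_mul, hπ₁, hπ₂, sq]⟩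

theorem exists_eq_mul_of_norm_eq_sq_mul_sq (b c : ℕ) {w : ℤ[i]}
    (hw : w.norm = ((b : ℤ) * c) ^ 2) :
    ∃ z₁ z₂ : ℤ[i], z₁.norm = (c : ℤ) ^ 2 ∧ z₂.norm = (b : ℤ) ^ 2 ∧ w = z₁ * z₂ := by
  induction c using Nat.recOnMul generalizing b w with
  | zero =>
    have hw0 : w = 0 := norm_eq_zero.1 (by simpa using hw)
    exact ⟨0, b, by simp, by rw [Zsqrtd.norm_natCast, sq], by simp [hw0]⟩
  | one => exact ⟨1, w, by simp, by simpa using hw, (one_mul w).symm⟩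
  | prime p hp =>
    obtain ⟨g, ⟨q, rfl⟩, hg⟩ :=
      exists_dvd_norm_eq_sq_of_sq_dvd_norm hp ⟨(b : ℤ) ^ 2, by rw [hw]; ring⟩
    refine ⟨g, q, hg, ?_, rfl⟩
    have hp0 : (p : ℤ) ^ 2 ≠ 0 := by exact_mod_cast pow_ne_zero 2 hp.ne_zero
    rw [Zsqrtd.norm_mul, hg] at hw
    exact mul_left_cancel₀ hp0 (by linear_combination hw)
  | mul c₁ c₂ ih₁ ih₂ =>
    obtain ⟨z₁, q, hz₁, hq, rfl⟩ := ih₁ (b * c₂) (by rw [hw]; push_cast; ring)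
    obtain ⟨z₁', z₂, hz₁', hz₂, rfl⟩ := ih₂ b hq
    refine ⟨z₁ * z₁', z₂, ?_, hz₂, (mul_assoc _ _ _).symm⟩
    rw [Zsqrtd.norm_mul, hz₁, hz₁']
    push_cast
    ring

end GaussianInt

theorem exists_sq_add_sq_eq_of_heron {a b c A : ℤ}
    (h : (a + b + c) * (-a + b + c) * (a - b + c) * (a + b - c) = 16 * A ^ 2) :
    ∃ m : ℤ, b ^ 2 + c ^ 2 - a ^ 2 = 2 * m ∧ m ^ 2 + (2 * A) ^ 2 = (b * c) ^ 2 := by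
  have hsq : (b ^ 2 + c ^ 2 - a ^ 2) ^ 2 + 16 * A ^ 2 = 4 * (b * c) ^ 2 := by
    linear_combination -h
  have hsq_even : Even ((b ^ 2 + c ^ 2 - a ^ 2) ^ 2) :=
    ⟨2 * (b * c) ^ 2 - 8 * A ^ 2, by linear_combination hsq⟩
  obtain ⟨m, hm⟩ := (Int.even_pow.1 hsq_even).1.two_dvd
  refine ⟨m, hm, mul_left_cancel₀ (four_ne_zero (α := ℤ)) ?_⟩
  linear_combination hsq - (b ^ 2 + c ^ 2 - a ^ 2 + 2 * m) * hm

theorem heronian_is_lattice_general (a b c : ℕ)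
    (harea : ∃ A : ℕ, ((a : ℤ) + b + c) * (-(a : ℤ) + b + c) * ((a : ℤ) - b + c) *
      ((a : ℤ) + b - c) = 16 * (A : ℤ) ^ 2) :
    ∃ A B C : ℤ × ℤ,
      (B.1 - C.1) ^ 2 + (B.2 - C.2) ^ 2 = (a : ℤ) ^ 2 ∧
      (C.1 - A.1) ^ 2 + (C.2 - A.2) ^ 2 = (b : ℤ) ^ 2 ∧
      (A.1 - B.1) ^ 2 + (A.2 - B.2) ^ 2 = (c : ℤ) ^ 2 := by
  obtain ⟨A, hA⟩ := harea
  obtain ⟨m, hm, hw⟩ := exists_sq_add_sq_eq_of_heron hA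
  obtain ⟨z₁, z₂, h₁, h₂, hz⟩ :=
    GaussianInt.exists_eq_mul_of_norm_eq_sq_mul_sq b c (w := ⟨m, 2 * A⟩) (by rw [Zsqrtd.norm_def, ← hw]; ring)
  have hre : m = z₁.re * z₂.re + -1 * z₁.im * z₂.im := congrArg Zsqrtd.re hz
  rw [Zsqrtd.norm_def] at h₁ h₂
  refine ⟨(0, 0), (z₁.re, z₁.im), (z₂.re, -z₂.im), ?_, ?_, ?_⟩
  · linear_combination h₁ + h₂ + 2 * hre + hm
  · linear_combination h₂
  · linear_combination h₁

/-- Yiu's theorem: every Heronian triangle (integer side lengths `a, b, c` satisfying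
the strict triangle inequalities, with integer area, i.e.
`(a+b+c)(−a+b+c)(a−b+c)(a+b−c) = 16A²` for some integer `A`) can be realized with
all three vertices in `ℤ²` (squared side lengths realized as squared distances). -/
theorem heronian_is_lattice (a b c : ℕ) (ha : 0 < a) (hb : 0 < b) (hc : 0 < c)
    (hab : (c : ℤ) < a + b) (hbc : (a : ℤ) < b + c) (hca : (b : ℤ) < c + a)
    (harea : ∃ A : ℕ, ((a : ℤ) + b + c) * (-(a : ℤ) + b + c) * ((a : ℤ) - b + c) *
      ((a : ℤ) + b - c) = 16 * (A : ℤ) ^ 2) :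
    ∃ A B C : ℤ × ℤ,
      (B.1 - C.1) ^ 2 + (B.2 - C.2) ^ 2 = (a : ℤ) ^ 2 ∧
      (C.1 - A.1) ^ 2 + (C.2 - A.2) ^ 2 = (b : ℤ) ^ 2 ∧
      (A.1 - B.1) ^ 2 + (A.2 - B.2) ^ 2 = (c : ℤ) ^ 2 :=
  heronian_is_lattice_general a b c harea
end

section
/- For all sufficiently large n ∈ ℕ, there exists a real number p > 0 and a set of at least c·n^{5/2} (for an absolute constant c > 0) non-degenerate triangles with vertices in {1, ..., n} × {1, ..., n} all having perimeter exactly p. -/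
/-!
Fix `M` and take the isosceles triangles with apex `P` and base vertices `P + (2Mt, ±(M² - t²))`
for `0 < t < M`. Since `(2Mt)² + (M² - t²)² = (M² + t²)²`, their sides are `M² + t²`, `M² + t²`
and `2(M² - t²)`, so all of them have perimeter `4M²`. With `M ≍ √n` the apex ranges over
`≍ n²` points of the grid and `t` over `≍ √n` values, giving `≍ n^{5/2}` distinct triangles.
-/

/-- Euclidean distance between two lattice points. -/
noncomputable def latticeDist (P Q : ℤ × ℤ) : ℝ :=
  Real.sqrt (((P.1 - Q.1) ^ 2 + (P.2 - Q.2) ^ 2 : ℤ))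

open Finset

lemma latticeDist_eq_of_sq_eq {P Q : ℤ × ℤ} {d : ℤ} (hd : 0 ≤ d)
    (h : (P.1 - Q.1) ^ 2 + (P.2 - Q.2) ^ 2 = d ^ 2) : latticeDist P Q = d := by
  rw [latticeDist, h, Int.cast_pow, Real.sqrt_sq (by exact_mod_cast hd)]

def InGrid (n : ℤ) (Q : ℤ × ℤ) : Prop :=
  1 ≤ Q.1 ∧ Q.1 ≤ n ∧ 1 ≤ Q.2 ∧ Q.2 ≤ n

def IsGridTriangleOfPerimeter (n : ℤ) (p : ℝ) (T : Finset (ℤ × ℤ)) : Prop :=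
  ∃ A B C : ℤ × ℤ, T = {A, B, C} ∧ InGrid n A ∧ InGrid n B ∧ InGrid n C ∧
    (B.1 - A.1) * (C.2 - A.2) - (B.2 - A.2) * (C.1 - A.1) ≠ 0 ∧
    latticeDist A B + latticeDist B C + latticeDist C A = p

def isoscelesTriangle (M t : ℤ) (P : ℤ × ℤ) : Finset (ℤ × ℤ) :=
  {P, P + (2 * M * t, M ^ 2 - t ^ 2), P + (2 * M * t, t ^ 2 - M ^ 2)}

section isoscelesTriangle

variable {M t : ℤ} (P : ℤ × ℤ)

lemma isoscelesTriangle_perimeter (ht : t ^ 2 ≤ M ^ 2) :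
    latticeDist P (P + (2 * M * t, M ^ 2 - t ^ 2)) +
      latticeDist (P + (2 * M * t, M ^ 2 - t ^ 2)) (P + (2 * M * t, t ^ 2 - M ^ 2)) +
      latticeDist (P + (2 * M * t, t ^ 2 - M ^ 2)) P = ((4 * M ^ 2 : ℤ) : ℝ) := by
  have leg : (0 : ℤ) ≤ M ^ 2 + t ^ 2 := by positivity
  have base : (0 : ℤ) ≤ 2 * (M ^ 2 - t ^ 2) := by linarith
  rw [latticeDist_eq_of_sq_eq leg (by simp only [Prod.fst_add, Prod.snd_add]; ring),
    latticeDist_eq_of_sq_eq base (by simp only [Prod.fst_add, Prod.snd_add]; ring),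
    latticeDist_eq_of_sq_eq leg (by simp only [Prod.fst_add, Prod.snd_add]; ring)]
  push_cast
  ring

lemma isoscelesTriangle_det_ne_zero (hM : M ≠ 0) (ht : t ≠ 0) (htM : t ^ 2 ≠ M ^ 2) :
    ((P + (2 * M * t, M ^ 2 - t ^ 2)).1 - P.1) * ((P + (2 * M * t, t ^ 2 - M ^ 2)).2 - P.2) -
      ((P + (2 * M * t, M ^ 2 - t ^ 2)).2 - P.2) * ((P + (2 * M * t, t ^ 2 - M ^ 2)).1 - P.1)
      ≠ 0 := by
  simp only [Prod.fst_add, Prod.snd_add, add_sub_cancel_left]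
  intro h
  have h' : 4 * M * t * (M ^ 2 - t ^ 2) = 0 := by linear_combination -h
  simp [hM, ht, sub_eq_zero, htM.symm] at h'

lemma mem_isoscelesTriangle_self : P ∈ isoscelesTriangle M t P := by
  simp [isoscelesTriangle]

lemma add_mem_isoscelesTriangle : P + (2 * M * t, M ^ 2 - t ^ 2) ∈ isoscelesTriangle M t P := by
  simp [isoscelesTriangle]

lemma eq_or_fst_eq_of_mem_isoscelesTriangle {Q : ℤ × ℤ} (hQ : Q ∈ isoscelesTriangle M t P) :
    Q = P ∨ Q.1 = P.1 + 2 * M * t := by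
  simp only [isoscelesTriangle, mem_insert, mem_singleton] at hQ
  rcases hQ with rfl | rfl | rfl <;> simp

lemma inGrid_of_mem_isoscelesTriangle {n : ℤ} (ht : 0 < t) (htM : t < M)
    (hP₁ : 1 ≤ P.1) (hP₁' : P.1 ≤ n - 2 * M ^ 2) (hP₂ : M ^ 2 ≤ P.2) (hP₂' : P.2 ≤ n - M ^ 2)
    {Q : ℤ × ℤ} (hQ : Q ∈ isoscelesTriangle M t P) : InGrid n Q := by
  have hMt : 0 ≤ 2 * M * t ∧ 2 * M * t ≤ 2 * M ^ 2 := ⟨by nlinarith, by nlinarith⟩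
  have ht₂ : t ^ 2 ≤ M ^ 2 := by nlinarith
  have ht₂' : 1 ≤ t ^ 2 := by nlinarith
  simp only [isoscelesTriangle, mem_insert, mem_singleton] at hQ
  rcases hQ with rfl | rfl | rfl <;> simp only [InGrid, Prod.fst_add, Prod.snd_add] <;>
    refine ⟨?_, ?_, ?_, ?_⟩ <;> linarith [hMt.1, hMt.2]

end isoscelesTriangle

lemma injOn_isoscelesTriangle {M : ℤ} (hM : 0 < M) :
    Set.InjOn (fun w : ℤ × (ℤ × ℤ) ↦ isoscelesTriangle M w.1 w.2) {w | 0 < w.1} := by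
  rintro ⟨t, P⟩ (ht : 0 < t) ⟨t', P'⟩ (ht' : 0 < t')
    (h : isoscelesTriangle M t P = isoscelesTriangle M t' P')
  have hMt : 0 < M * t := mul_pos hM ht
  have hMt' : 0 < M * t' := mul_pos hM ht'
  -- each apex has the smallest abscissa of its triangle
  obtain rfl : P = P' := by
    have h₁ := eq_or_fst_eq_of_mem_isoscelesTriangle P' (h ▸ mem_isoscelesTriangle_self P)
    have h₂ := eq_or_fst_eq_of_mem_isoscelesTriangle P (h.symm ▸ mem_isoscelesTriangle_self P')
    rcases h₁ with h₁ | h₁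
    · exact h₁
    rcases h₂ with h₂ | h₂
    · exact h₂.symm
    linarith
  obtain h₁ | h₁ := eq_or_fst_eq_of_mem_isoscelesTriangle P (h ▸ add_mem_isoscelesTriangle P)
  · have := congrArg Prod.fst h₁
    simp only [Prod.fst_add] at this
    linarith
  · have : M * t = M * t' := by simp only [Prod.fst_add] at h₁; linarith
    rw [mul_left_cancel₀ hM.ne' this]

lemma exists_card_eq_isGridTriangleOfPerimeter {n M : ℤ} (hM : 1 ≤ M) (hn : 2 * M ^ 2 ≤ n) :
    ∃ S : Finset (Finset (ℤ × ℤ)),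
      (∀ T ∈ S, IsGridTriangleOfPerimeter n ((4 * M ^ 2 : ℤ) : ℝ) T) ∧
      (S.card : ℤ) = (M - 1) * (n - 2 * M ^ 2) * (n - 2 * M ^ 2 + 1) := by
  set D := Icc 1 (M - 1) ×ˢ (Icc 1 (n - 2 * M ^ 2) ×ˢ Icc (M ^ 2) (n - M ^ 2))
  refine ⟨D.image fun w ↦ isoscelesTriangle M w.1 w.2, ?_, ?_⟩
  · intro T hT
    obtain ⟨⟨t, P⟩, hw, rfl⟩ := mem_image.mp hT
    simp only [D, mem_product, mem_Icc] at hw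
    obtain ⟨⟨ht, htM⟩, ⟨hP₁, hP₁'⟩, hP₂, hP₂'⟩ := hw
    have hgrid : ∀ Q ∈ isoscelesTriangle M t P, InGrid n Q := fun _ ↦
      inGrid_of_mem_isoscelesTriangle P (by omega) (by omega) hP₁ hP₁' hP₂ hP₂'
    have ht₂ : t ^ 2 < M ^ 2 := by nlinarith
    exact ⟨_, _, _, rfl, hgrid _ (mem_isoscelesTriangle_self P),
      hgrid _ (add_mem_isoscelesTriangle P), hgrid _ (by simp [isoscelesTriangle]),
      isoscelesTriangle_det_ne_zero P (by omega) (by omega) ht₂.ne,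
      isoscelesTriangle_perimeter P ht₂.le⟩
  · have hinj : Set.InjOn (fun w : ℤ × (ℤ × ℤ) ↦ isoscelesTriangle M w.1 w.2) D :=
      (injOn_isoscelesTriangle (by omega)).mono fun w hw ↦ by
        simp only [D, coe_product, Set.mem_prod, coe_Icc, Set.mem_Icc] at hw
        exact hw.1.1
    rw [card_image_of_injOn hinj, card_product, card_product, Int.card_Icc, Int.card_Icc,
      Int.card_Icc]
    push_cast
    rw [Int.toNat_of_nonneg (by omega), Int.toNat_of_nonneg (by omega),
      Int.toNat_of_nonneg (by omega)]
    ring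

lemma rpow_five_halves_le {x m : ℝ} (hsqrt : √x ≤ 8 * (m - 1)) (hm : 16 * m ^ 2 ≤ x) :
    1 / 32 * x ^ ((5 : ℝ) / 2) ≤ (m - 1) * (x - 2 * m ^ 2) * (x - 2 * m ^ 2 + 1) := by
  have hx : 0 ≤ x := le_trans (by positivity) hm
  have hm₁ : 0 ≤ m - 1 := by linarith [Real.sqrt_nonneg x]
  have hsplit : x ^ ((5 : ℝ) / 2) = x ^ 2 * √x := by
    rw [show (5 : ℝ) / 2 = 2 + 1 / 2 by norm_num, Real.rpow_add' hx (by norm_num),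
      Real.sqrt_eq_rpow, Real.rpow_two]
  have hhalf : x / 2 ≤ x - 2 * m ^ 2 := by linarith
  have hx₂ : 0 ≤ x / 2 := by positivity
  calc 1 / 32 * x ^ ((5 : ℝ) / 2) ≤ 1 / 32 * x ^ 2 * (8 * (m - 1)) := by
        rw [hsplit, ← mul_assoc]; gcongr
    _ = (m - 1) * ((x / 2) * (x / 2)) := by ring
    _ ≤ (m - 1) * ((x - 2 * m ^ 2) * (x - 2 * m ^ 2 + 1)) := by
        gcongr <;> linarith
    _ = (m - 1) * (x - 2 * m ^ 2) * (x - 2 * m ^ 2 + 1) := by ring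

/-- For all sufficiently large `n`, there exist a perimeter `p > 0` and at least
`c·n^{5/2}` triangles (distinct as vertex sets) with vertices in `{1,…,n}²`, all
non-degenerate and of perimeter exactly `p`. -/
theorem many_equal_perimeter_triangles_in_grid :
    ∃ c : ℝ, 0 < c ∧ ∃ N : ℕ, ∀ n : ℕ, N ≤ n →
      ∃ p : ℝ, 0 < p ∧ ∃ S : Finset (Finset (ℤ × ℤ)),
        (∀ t ∈ S, ∃ A B C : ℤ × ℤ, t = {A, B, C} ∧
          (1 ≤ A.1 ∧ A.1 ≤ n ∧ 1 ≤ A.2 ∧ A.2 ≤ n) ∧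
          (1 ≤ B.1 ∧ B.1 ≤ n ∧ 1 ≤ B.2 ∧ B.2 ≤ n) ∧
          (1 ≤ C.1 ∧ C.1 ≤ n ∧ 1 ≤ C.2 ∧ C.2 ≤ n) ∧
          (B.1 - A.1) * (C.2 - A.2) - (B.2 - A.2) * (C.1 - A.1) ≠ 0 ∧
          latticeDist A B + latticeDist B C + latticeDist C A = p) ∧
        c * (n : ℝ) ^ ((5 : ℝ) / 2) ≤ (S.card : ℝ) := by
  refine ⟨1 / 32, by norm_num, 144, fun n hn ↦ ?_⟩
  set M := Nat.sqrt n / 4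
  have hM : 3 ≤ M := by have := Nat.le_sqrt.mpr (show 12 * 12 ≤ n by omega); omega
  have hMn : 16 * M ^ 2 ≤ n := calc
    16 * M ^ 2 = (4 * M) ^ 2 := by ring
    _ ≤ Nat.sqrt n ^ 2 := Nat.pow_le_pow_left (by omega) 2
    _ ≤ n := Nat.sqrt_le' n
  have hsqrt : √(n : ℝ) ≤ 8 * ((M : ℝ) - 1) := by
    have hM' : Nat.sqrt n + 9 ≤ 8 * M := by omega
    have : (Nat.sqrt n : ℝ) + 9 ≤ 8 * M := by exact_mod_cast hM'
    linarith [Real.real_sqrt_lt_nat_sqrt_succ (a := n)]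
  obtain ⟨S, hS, hcard⟩ :=
    exists_card_eq_isGridTriangleOfPerimeter (n := n) (M := M) (by omega) (by norm_cast; omega)
  refine ⟨_, by push_cast; positivity, S, hS, ?_⟩
  have hcardR : (S.card : ℝ) = ((M : ℝ) - 1) * (n - 2 * M ^ 2) * (n - 2 * M ^ 2 + 1) := by
    exact_mod_cast hcard
  rw [hcardR]
  exact rpow_five_halves_le hsqrt (by exact_mod_cast hMn)
end
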